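/- Let (λ, μ) be a codimension-3 decoration with k = ∑μⱼ and suppose λ₄ exists and satisfies λᵢ + μ₁ = k+1 for i = 1, 2 (two largest parts pair perfectly with μ₁). Then the minimal tight double link of (λ, μ) is the pair ((λ₃, λ₄, …, λ_b), (λ₃+p, μ₂, …, μ_t)) reordered, it has exactly b-2 nonzero parts in its first partition, and for every index i with 3 ≤ i ≤ r, where λ_i + μ₁ = k+1, the corresponding parts l = λ_i of the new pair satisfy l + m₁ = κ' + 1 with m₁ the largest part of the new second partition and κ' the new level. -/

import Mathlib

/-- Sort a list of integers in non-increasing order. -/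
def rsort (l : List ℤ) : List ℤ := List.insertionSort (· ≥ ·) l

/-- Remove all non-positive parts (trailing zeros) from a partition. -/
def strip (l : List ℤ) : List ℤ := l.filter (fun x => 0 < x)

/-- The smallest minimal link of a codimension-`c` pair of partitions `(λ, μ)`:
choose the `c` largest parts of `λ` (padding with zeros if needed), shift them by
`p = (c-2)k + 1 - (λ₁ + ⋯ + λ_c)` where `k = ∑ μⱼ`, merge with `μ` and re-sort;
the other partition becomes `(λ_{c+1}, …, λ_b)`. -/
def smlink (c : ℕ) (P : List ℤ × List ℤ) : List ℤ × List ℤ :=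
  let p : ℤ := ((c : ℤ) - 2) * P.2.sum + 1 - (P.1.take c).sum
  (strip (rsort ((P.1.take c ++ List.replicate (c - P.1.length) 0).map (· + p) ++ P.2)),
   strip (P.1.drop c))

/-- The smallest minimal link of `P` produces nonnegative parts, i.e. `λ_c + p ≥ 0`. -/
def ValidLink (c : ℕ) (P : List ℤ × List ℤ) : Prop :=
  0 ≤ P.1.getD (c - 1) 0 + (((c : ℤ) - 2) * P.2.sum + 1 - (P.1.take c).sum)

/-- A partition: a non-increasing list of positive integers. -/
def IsPartition (l : List ℤ) : Prop := l.Pairwise (· ≥ ·) ∧ ∀ x ∈ l, 0 < x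

/-- A codimension-`c` decoration: a pair of partitions reachable to the complete
intersection pair `((1^c), (1))` by finitely many smallest minimal links, all of
whose intermediate links are valid (have nonnegative parts). -/
def IsDecoration (c : ℕ) (P : List ℤ × List ℤ) : Prop :=
  IsPartition P.1 ∧ IsPartition P.2 ∧
  ∃ n : ℕ, (∀ m < n, ValidLink c ((smlink c)^[m] P)) ∧
    (smlink c)^[n] P = (List.replicate c 1, [1])

/-- The link of a codimension-`c` pair `(λ, μ)` at a chosen sublist `λ'` of `c`
parts of `λ` (zeros allowed): with shift `p = (c-2)∑μ + 1 - ∑λ'ᵢ`, the new pair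
is `(rsort(λ'₁+p, …, λ'_c+p, μ₁, …, μ_t), λ \ λ')`. -/
def linkAt (c : ℕ) (lam' : List ℤ) (P : List ℤ × List ℤ) : List ℤ × List ℤ :=
  let p : ℤ := ((c : ℤ) - 2) * P.2.sum + 1 - lam'.sum
  (strip (rsort (lam'.map (· + p) ++ P.2)), strip (P.1.diff lam'))

/-- The minimal tight double link of a codimension-`c` pair `(λ, μ)`: first the
smallest minimal link (shift `p`), then the link at the sublist
`(λ₁+p, …, λ_{c-1}+p, μ₁)`, whose shift is `q = λ_c - μ₁`. -/
def tightDouble (c : ℕ) (P : List ℤ × List ℤ) : List ℤ × List ℤ :=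
  linkAt c
    ((P.1.take (c - 1)).map
        (· + (((c : ℤ) - 2) * P.2.sum + 1 - (P.1.take c).sum)) ++ [P.2.getD 0 0])
    (smlink c P)

/-!
Write `λ = (l₁, l₂, l₃, t)`, `μ = (m₁, μ')` and `k = ∑ μ`. The relation `∑ λ = 2k + 1` holds for
`((1,1,1),(1))` and is carried back along every valid smallest minimal link, so both shifts of the tight double link are explicit:
`p = k + 1 - l₁ - l₂ - l₃` and `q = l₃ - m₁`. The hypothesis `lᵢ + m₁ = k + 1` (`i = 1, 2`) makes
`lᵢ + p + q = 0`, so the first partition is `(l₃, t)`. When also `l₃ + m₁ = k + 1`, all three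
shifted parts equal `c = m₁ - l₃`; validity of the next smallest minimal link bounds
`m₁ + m₂ ≤ ∑ t + 1`, i.e. `m₂ ≤ c`, so `c` is the largest part of the new second partition
`(c, μ')`, whose level is `k - l₃`.
-/

theorem rsort_perm (l : List ℤ) : (rsort l).Perm l := List.perm_insertionSort _ l

theorem pairwise_rsort (l : List ℤ) : (rsort l).Pairwise (· ≥ ·) := List.pairwise_insertionSort _ l

theorem strip_eq_self {l : List ℤ} (h : ∀ x ∈ l, 0 < x) : strip l = l :=
  List.filter_eq_self.2 fun x hx => by simpa using h x hx

theorem pos_of_mem_strip {l : List ℤ} {x : ℤ} (h : x ∈ strip l) : 0 < x := by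
  simpa using (List.mem_filter.1 h).2

theorem sum_strip {l : List ℤ} (h : ∀ x ∈ l, 0 ≤ x) : (strip l).sum = l.sum := by
  induction l with
  | nil => rfl
  | cons x t ih =>
    have ht := ih fun y hy => h y (List.mem_cons_of_mem x hy)
    rcases (h x List.mem_cons_self).lt_or_eq with hx | hx
    · simp [strip, hx, ← ht]
    · simp [strip, ← hx, ← ht]

theorem sum_strip_rsort {l : List ℤ} (h : ∀ x ∈ l, 0 ≤ x) : (strip (rsort l)).sum = l.sum := by
  rw [sum_strip fun x hx => h x ((rsort_perm l).subset hx), (rsort_perm l).sum_eq]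

theorem strip_rsort_of_perm {l l' : List ℤ} (h : l.Perm l') (hs : (strip l').Pairwise (· ≥ ·)) :
    strip (rsort l) = strip l' :=
  (((rsort_perm l).trans h).filter _).eq_of_pairwise' ((pairwise_rsort l).filter _) hs

theorem isPartition_strip_rsort (l : List ℤ) : IsPartition (strip (rsort l)) :=
  ⟨(pairwise_rsort l).filter _, fun _ => pos_of_mem_strip⟩

theorem List.Sublist.subperm_strip_rsort {s l : List ℤ} (hs : ∀ x ∈ s, 0 < x) (h : s.Sublist l) :
    s.Subperm (strip (rsort l)) := by
  have h' : (strip s).Sublist (strip l) := h.filter _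
  rw [strip_eq_self hs] at h'
  exact h'.subperm.trans ((rsort_perm l).symm.filter _).subperm

section
variable {α : Type*} [AddCommMonoid α] [PartialOrder α] [IsOrderedAddMonoid α]

theorem List.Sublist.sum_le_sum_take {l s : List α} (hl : l.Pairwise (· ≥ ·)) (hs : s.Sublist l) :
    s.sum ≤ (l.take s.length).sum := by
  induction l generalizing s with
  | nil => simp [List.sublist_nil.1 hs]
  | cons a l ih =>
    rcases s with _ | ⟨x, s⟩
    · simp
    have hxa : x ≤ a := by
      rcases List.mem_cons.1 (hs.subset List.mem_cons_self) with rfl | hx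
      · exact le_rfl
      · exact List.rel_of_pairwise_cons hl hx
    have hsl : s.Sublist l := by
      cases hs with
      | cons _ h => exact (List.sublist_cons_self x s).trans h
      | cons_cons _ h => exact h
    simpa using add_le_add hxa (ih hl.of_cons hsl)

theorem List.Subperm.sum_le_sum_take {l s : List α} (hl : l.Pairwise (· ≥ ·)) (hs : s.Subperm l) :
    s.sum ≤ (l.take s.length).sum := by
  obtain ⟨s', hp, hsub⟩ := hs
  simpa [hp.sum_eq, hp.length_eq] using hsub.sum_le_sum_take hl

end

theorem List.sum_take_succ_getD {M : Type*} [AddMonoid M] (l : List M) (i : ℕ) :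
    (l.take (i + 1)).sum = (l.take i).sum + l.getD i 0 := by
  rcases lt_or_ge i l.length with hi | hi
  · simp [List.sum_take_succ l i hi, hi]
  · simp [List.take_of_length_le, hi, Nat.le_succ_of_le hi]

theorem validLink_iff {c : ℕ} {P : List ℤ × List ℤ} (hc : 1 ≤ c) :
    ValidLink c P ↔ (P.1.take (c - 1)).sum ≤ ((c : ℤ) - 2) * P.2.sum + 1 := by
  obtain ⟨n, rfl⟩ := Nat.exists_eq_add_of_le' hc
  rw [ValidLink, List.sum_take_succ_getD]
  simp only [Nat.add_sub_cancel]
  constructor <;> intro h <;> linarith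

theorem validLink_base {c : ℕ} (hc : 1 ≤ c) : ValidLink c (List.replicate c 1, [1]) := by
  simp [ValidLink, show c - 1 < c by omega, List.sum_replicate]
  omega

theorem getD_pred_le_of_mem_take_append_replicate {l : List ℤ} (hl : IsPartition l) {c : ℕ}
    {x : ℤ} (hx : x ∈ l.take c ++ List.replicate (c - l.length) 0) : l.getD (c - 1) 0 ≤ x := by
  rcases List.mem_append.1 hx with hx | hx
  · obtain ⟨i, hi, rfl⟩ := List.getElem_of_mem hx
    simp only [List.length_take, lt_min_iff] at hi
    rw [List.getElem_take]
    by_cases hc : c - 1 < l.length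
    · rw [List.getD_eq_getElem _ _ hc]
      rcases (show i ≤ c - 1 by omega).lt_or_eq with hi' | rfl
      · exact List.pairwise_iff_getElem.1 hl.1 _ _ _ _ hi'
      · exact le_rfl
    · rw [List.getD_eq_default _ _ (by omega)]
      exact (hl.2 _ (List.getElem_mem _)).le
  · rw [List.eq_of_mem_replicate hx, List.getD_eq_default _ _ (by grind)]

theorem isPartition_smlink_fst (c : ℕ) (P : List ℤ × List ℤ) : IsPartition (smlink c P).1 :=
  isPartition_strip_rsort _

theorem isPartition_smlink_snd {c : ℕ} {P : List ℤ × List ℤ} (hlam : IsPartition P.1) :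
    IsPartition (smlink c P).2 :=
  ⟨(hlam.1.sublist (List.drop_sublist _ _)).filter _, fun _ => pos_of_mem_strip⟩

theorem sum_fst_eq_of_smlink {c : ℕ} (hc : c ≠ 1) {P : List ℤ × List ℤ} (hlam : IsPartition P.1)
    (hmu : IsPartition P.2) (hv : ValidLink c P)
    (h : (smlink c P).1.sum = ((c : ℤ) - 1) * (smlink c P).2.sum + 1) :
    P.1.sum = ((c : ℤ) - 1) * P.2.sum + 1 := by
  set p := ((c : ℤ) - 2) * P.2.sum + 1 - (P.1.take c).sum
  set top := P.1.take c ++ List.replicate (c - P.1.length) 0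
  have htop : ∀ x ∈ top, 0 ≤ x + p := fun x hx => by
    have := getD_pred_le_of_mem_take_append_replicate hlam hx
    rw [ValidLink] at hv
    linarith
  have hfst : (smlink c P).1.sum = (P.1.take c).sum + c * p + P.2.sum := by
    have hlen : top.length = c := by simp [top]; omega
    rw [smlink, sum_strip_rsort]
    · rw [List.sum_append, List.sum_map_add, List.map_id', List.map_const', List.sum_replicate,
        hlen]
      simp [p]
    · intro x hx
      rcases List.mem_append.1 hx with hx | hx
      · obtain ⟨y, hy, rfl⟩ := List.mem_map.1 hx
        exact htop y hy
      · exact (hmu.2 x hx).le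
  have hsnd : (smlink c P).2.sum = (P.1.drop c).sum :=
    sum_strip fun x hx => (hlam.2 x (List.mem_of_mem_drop hx)).le
  have hsplit := List.sum_take_add_sum_drop P.1 c
  have hc' : (c : ℤ) - 1 ≠ 0 := sub_ne_zero.2 (by exact_mod_cast hc)
  apply mul_left_cancel₀ hc'
  linear_combination (-1 : ℤ) * h + hfst - (c - 1) * hsnd - (c - 1) * hsplit

theorem sum_fst_eq_of_iterate_smlink {c : ℕ} (hc : c ≠ 1) (n : ℕ) (P : List ℤ × List ℤ)
    (hlam : IsPartition P.1) (hmu : IsPartition P.2)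
    (hvalid : ∀ m < n, ValidLink c ((smlink c)^[m] P))
    (hbase : (smlink c)^[n] P = (List.replicate c 1, [1])) :
    P.1.sum = ((c : ℤ) - 1) * P.2.sum + 1 := by
  induction n generalizing P with
  | zero =>
    subst hbase
    simp [List.sum_replicate]
  | succ n ih =>
    refine sum_fst_eq_of_smlink hc hlam hmu (hvalid 0 n.succ_pos) ?_
    exact ih _ (isPartition_smlink_fst c P) (isPartition_smlink_snd hlam)
      (fun m hm => hvalid (m + 1) (by omega)) hbase

theorem IsDecoration.sum_fst {c : ℕ} {P : List ℤ × List ℤ} (h : IsDecoration c P) (hc : c ≠ 1) :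
    P.1.sum = ((c : ℤ) - 1) * P.2.sum + 1 :=
  let ⟨hlam, hmu, n, hvalid, hbase⟩ := h
  sum_fst_eq_of_iterate_smlink hc n P hlam hmu hvalid hbase

theorem IsDecoration.validLink_smlink {c : ℕ} {P : List ℤ × List ℤ} (h : IsDecoration c P)
    (hc : 1 ≤ c) (hlen : P.1.length ≠ c) : ValidLink c (smlink c P) := by
  obtain ⟨-, -, n, hvalid, hbase⟩ := h
  rcases n with _ | _ | n
  · rw [Function.iterate_zero_apply] at hbase
    simp [hbase] at hlen
  · rw [Function.iterate_one] at hbase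
    exact hbase ▸ validLink_base hc
  · exact hvalid 1 (by omega)

theorem add_le_of_validLink_smlink_three {lam μ : List ℤ} {m₁ m₂ : ℤ}
    (hlam : ∀ x ∈ lam.drop 3, 0 < x)
    (hm₁ : 0 < m₁) (hm₂ : 0 < m₂) (hv : ValidLink 3 (smlink 3 (lam, m₁ :: m₂ :: μ))) :
    m₁ + m₂ ≤ (lam.drop 3).sum + 1 := by
  have hsub : [m₁, m₂].Subperm (smlink 3 (lam, m₁ :: m₂ :: μ)).1 :=
    List.Sublist.subperm_strip_rsort (by simp [hm₁, hm₂])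
      (((List.nil_sublist μ).cons_cons m₂).cons_cons m₁ |>.trans (List.sublist_append_right _ _))
  have htop := hsub.sum_le_sum_take (isPartition_smlink_fst 3 _).1
  simp only [List.sum_cons, List.sum_nil, add_zero, List.length_cons, List.length_nil] at htop
  have hsnd : (smlink 3 (lam, m₁ :: m₂ :: μ)).2.sum = (lam.drop 3).sum :=
    sum_strip fun x hx => (hlam x hx).le
  rw [validLink_iff (by norm_num), hsnd] at hv
  norm_num at hv
  linarith

section TightDoubleThree
variable {l₁ l₂ l₃ m₁ k : ℤ} {t μ : List ℤ}

theorem tightDouble_three_cons {p q : ℤ} (ht : ∀ x ∈ t, 0 < x)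
    (hk : m₁ + μ.sum = k) (hsum : l₁ + l₂ + l₃ + t.sum = 2 * k + 1)
    (hp : p = k + 1 - (l₁ + l₂ + l₃)) (hq : q = l₃ - m₁) :
    tightDouble 3 (l₁ :: l₂ :: l₃ :: t, m₁ :: μ) =
      (strip (rsort ((l₁ + p + q) :: (l₂ + p + q) :: l₃ :: t)),
       strip ((strip (rsort ((l₁ + p) :: (l₂ + p) :: (l₃ + p) :: m₁ :: μ))).diff
         [l₁ + p, l₂ + p, m₁])) := by
  simp only [tightDouble, linkAt, smlink]
  norm_num
  rw [strip_eq_self ht, show m₁ + μ.sum + 1 - (l₁ + (l₂ + l₃)) = p by omega,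
    show t.sum + 1 - (l₁ + p + (l₂ + p + m₁)) = q by omega, show m₁ + q = l₃ by omega]
  exact ⟨rfl, rfl⟩

theorem tightDouble_three_fst (hl₃t : IsPartition (l₃ :: t))
    (hk : m₁ + μ.sum = k) (hsum : l₁ + l₂ + l₃ + t.sum = 2 * k + 1)
    (h₁ : l₁ + m₁ = k + 1) (h₂ : l₂ + m₁ = k + 1) :
    (tightDouble 3 (l₁ :: l₂ :: l₃ :: t, m₁ :: μ)).1 = l₃ :: t := by
  obtain ⟨p, hp⟩ : ∃ p, p = k + 1 - (l₁ + l₂ + l₃) := ⟨_, rfl⟩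
  have hstrip : strip (0 :: 0 :: l₃ :: t) = l₃ :: t := by
    simpa [strip] using strip_eq_self hl₃t.2
  rw [tightDouble_three_cons (fun x hx => hl₃t.2 x (List.mem_cons_of_mem l₃ hx)) hk hsum hp rfl,
    show l₁ + p + (l₃ - m₁) = 0 by omega, show l₂ + p + (l₃ - m₁) = 0 by omega,
    strip_rsort_of_perm (List.Perm.refl _) (by rw [hstrip]; exact hl₃t.1), hstrip]

theorem le_sub_of_validLink_smlink_three (ht : ∀ x ∈ t, 0 < x) (hμ : IsPartition (m₁ :: μ))
    (hk : m₁ + μ.sum = k) (hsum : l₁ + l₂ + l₃ + t.sum = 2 * k + 1)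
    (h₁ : l₁ + m₁ = k + 1) (h₂ : l₂ + m₁ = k + 1) (h₃ : l₃ + m₁ = k + 1)
    (hv : ValidLink 3 (smlink 3 (l₁ :: l₂ :: l₃ :: t, m₁ :: μ))) :
    ∀ x ∈ μ, x ≤ m₁ - l₃ := by
  rcases μ with _ | ⟨m₂, μ⟩
  · simp
  have hm₂ : m₁ + m₂ ≤ t.sum + 1 := add_le_of_validLink_smlink_three (lam := l₁ :: l₂ :: l₃ :: t)
    ht (hμ.2 m₁ (by simp)) (hμ.2 m₂ (by simp)) hv
  simp only [List.sum_cons] at hk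
  intro x hx
  have hx₂ : x ≤ m₂ := by
    rcases List.mem_cons.1 hx with rfl | hx
    · exact le_rfl
    · exact List.rel_of_pairwise_cons hμ.1.of_cons hx
  omega

theorem tightDouble_three_snd (hl₃t : IsPartition (l₃ :: t)) (ht₀ : t ≠ [])
    (hμ : IsPartition (m₁ :: μ))
    (hk : m₁ + μ.sum = k) (hsum : l₁ + l₂ + l₃ + t.sum = 2 * k + 1)
    (h₁ : l₁ + m₁ = k + 1) (h₂ : l₂ + m₁ = k + 1) (h₃ : l₃ + m₁ = k + 1)
    (hv : ValidLink 3 (smlink 3 (l₁ :: l₂ :: l₃ :: t, m₁ :: μ))) :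
    (tightDouble 3 (l₁ :: l₂ :: l₃ :: t, m₁ :: μ)).2 = (m₁ - l₃) :: μ := by
  have ht : ∀ x ∈ t, 0 < x := fun x hx => hl₃t.2 x (List.mem_cons_of_mem l₃ hx)
  have hle := le_sub_of_validLink_smlink_three ht hμ hk hsum h₁ h₂ h₃ hv
  have hc : 0 < m₁ - l₃ := by
    rcases μ with _ | ⟨m₂, μ⟩
    · have := List.sum_pos t ht ht₀
      simp only [List.sum_nil] at hk
      omega
    · linarith [hle m₂ List.mem_cons_self, hμ.2 m₂ (by simp)]
  have hl₃ : 0 < l₃ := hl₃t.2 l₃ List.mem_cons_self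
  have hnew : IsPartition (m₁ :: (m₁ - l₃) :: (m₁ - l₃) :: (m₁ - l₃) :: μ) := by
    have hμle : ∀ x ∈ μ, x ≤ m₁ := fun x hx => List.rel_of_pairwise_cons hμ.1 hx
    refine ⟨?_, ?_⟩
    · simp only [List.pairwise_cons, List.mem_cons, forall_eq_or_imp]
      exact ⟨⟨by omega, by omega, by omega, hμle⟩, ⟨le_rfl, le_rfl, hle⟩, ⟨le_rfl, hle⟩, hle,
        hμ.1.of_cons⟩
    · simp only [List.mem_cons, forall_eq_or_imp]
      exact ⟨hμ.2 m₁ List.mem_cons_self, hc, hc, hc, fun x hx => hμ.2 x (List.mem_cons_of_mem m₁ hx)⟩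
  have hperm : ((m₁ - l₃) :: (m₁ - l₃) :: (m₁ - l₃) :: m₁ :: μ).Perm
      (m₁ :: (m₁ - l₃) :: (m₁ - l₃) :: (m₁ - l₃) :: μ) :=
    List.perm_middle (l₁ := [m₁ - l₃, m₁ - l₃, m₁ - l₃])
  obtain ⟨p, hp⟩ : ∃ p, p = k + 1 - (l₁ + l₂ + l₃) := ⟨_, rfl⟩
  rw [tightDouble_three_cons ht hk hsum hp rfl, show l₁ + p = m₁ - l₃ by omega,
    show l₂ + p = m₁ - l₃ by omega, show l₃ + p = m₁ - l₃ by omega,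
    strip_rsort_of_perm hperm (by rw [strip_eq_self hnew.2]; exact hnew.1),
    strip_eq_self hnew.2]
  have hne : m₁ ≠ m₁ - l₃ := by omega
  simp only [List.diff_cons, List.diff_nil, beq_iff_eq, hne, not_false_eq_true,
    List.erase_cons_tail, List.erase_cons_head]
  exact strip_eq_self (List.forall_mem_cons.2 ⟨hc, fun x hx => hμ.2 x (List.mem_cons_of_mem m₁ hx)⟩)

end TightDoubleThree

/-- Lemma Grinduction: let `(λ, μ)` be a codimension-3 decoration with
`k = ∑μⱼ`, at least four parts in `λ`, and suppose `λᵢ + μ₁ = k+1` for all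
`1 ≤ i ≤ r` where `r ≥ 2`. Then the minimal tight double link of `(λ, μ)` is the
pair `((λ₃, …, λ_b), (λ₃+p, μ₂, …, μ_t))` (reordered), its first partition has
exactly `b-2` nonzero parts, and for each `3 ≤ i ≤ r` the part `l = λᵢ` of the
new pair satisfies `l + m₁ = κ' + 1`, where `m₁` is the largest part of the new
second partition and `κ'` is the new level. -/
theorem stmt19 (P : List ℤ × List ℤ) (k : ℤ) (hk : P.2.sum = k)
    (h : IsDecoration 3 P) (hb : 4 ≤ P.1.length)
    (r : ℕ) (hr : 2 ≤ r)
    (hG : ∀ i : ℕ, 1 ≤ i → i ≤ r → P.1.getD (i - 1) 0 + P.2.getD 0 0 = k + 1) :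
    (tightDouble 3 P).1 = P.1.drop 2 ∧
    (tightDouble 3 P).1.length = P.1.length - 2 ∧
    (∀ i : ℕ, 3 ≤ i → i ≤ r →
      (tightDouble 3 P).1.getD (i - 3) 0 + (tightDouble 3 P).2.getD 0 0
        = (tightDouble 3 P).2.sum + 1) := by
  have hsum := h.sum_fst (by norm_num)
  have hv := h.validLink_smlink (by norm_num) (by omega)
  obtain ⟨hlam, hmu, -⟩ := h
  obtain ⟨lam, mu⟩ := P
  obtain ⟨l₁, l₂, l₃, t, rfl⟩ : ∃ l₁ l₂ l₃ t, lam = l₁ :: l₂ :: l₃ :: t :=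
    match lam, hb with
    | l₁ :: l₂ :: l₃ :: t, _ => ⟨l₁, l₂, l₃, t, rfl⟩
  have hl₃t : IsPartition (l₃ :: t) :=
    ⟨hlam.1.of_cons.of_cons, fun x hx => hlam.2 x (by simp [hx])⟩
  have hG₁ := hG 1 le_rfl (by omega)
  have hG₂ := hG 2 (by norm_num) hr
  rcases mu with _ | ⟨m₁, μ⟩
  · have := List.sum_nonneg fun x hx => (hl₃t.2 x hx).le
    simp only [List.sum_nil, List.sum_cons, List.getD_cons_zero, List.getD_cons_succ,
      List.getD_nil, Nat.sub_self] at hk hsum hG₁ hG₂ this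
    push_cast at hsum
    omega
  simp only [List.sum_cons, List.getD_cons_zero, List.getD_cons_succ, Nat.sub_self,
    List.drop_succ_cons, List.drop_zero, List.length_cons] at hk hsum hG₁ hG₂ hb ⊢
  replace hsum : l₁ + l₂ + l₃ + t.sum = 2 * k + 1 := by push_cast at hsum; linarith
  have hfst := tightDouble_three_fst hl₃t hk hsum hG₁ hG₂
  refine ⟨hfst, by simp [hfst], fun i hi hir => ?_⟩
  obtain ⟨j, rfl⟩ : ∃ j, i = j + 3 := ⟨i - 3, by omega⟩
  have hG₃ := hG 3 (by norm_num) (by omega)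
  have hGi : (l₃ :: t).getD j 0 + m₁ = k + 1 := by simpa using hG (j + 3) (by omega) hir
  simp only [List.getD_cons_zero, List.getD_cons_succ, Nat.add_sub_cancel] at hG₃ ⊢
  rw [hfst, tightDouble_three_snd hl₃t (by rintro rfl; simp at hb) hmu hk hsum hG₁ hG₂ hG₃ hv]
  simp only [List.getD_cons_zero, List.sum_cons]
  omega
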